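/- The branching-process weights form a probability distribution on 𝒫_D: ∑_{P ∈ 𝒫_D} π(P) = 1. -/

import Mathlib

open Finset

/-- `P` is a partition of the finite type `𝒯`: its blocks are nonempty and every
element of `𝒯` belongs to exactly one block. -/
def IsPartitionOn {𝒯 : Type*} [Fintype 𝒯] [DecidableEq 𝒯] (P : Finset (Finset 𝒯)) : Prop :=
  (∀ T ∈ P, T.Nonempty) ∧ ∀ t : 𝒯, ∃! T, T ∈ P ∧ t ∈ T

/-- A hierarchy of depth `D` on the finite type `𝒯`: a sequence of partitions
`P_0, ..., P_D` of `𝒯` such that `P_0 = {𝒯}`, `P_D = {{t} : t ∈ 𝒯}`, and for each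
`d < D` and each block `T ∈ P_d`, the set `s(T)` of blocks of `P_{d+1}` included in `T`
is a partition of `T` different from `{T}`. -/
structure Hierarchy (𝒯 : Type*) [Fintype 𝒯] [DecidableEq 𝒯] (D : ℕ) where
  part : ℕ → Finset (Finset 𝒯)
  isPartition : ∀ d ≤ D, IsPartitionOn (part d)
  part_zero : part 0 = {(Finset.univ : Finset 𝒯)}
  part_last : part D = Finset.univ.image fun t : 𝒯 => ({t} : Finset 𝒯)
  sibling_cover : ∀ d < D, ∀ T ∈ part d, ∀ t ∈ T, ∃ U ∈ part (d + 1), U ⊆ T ∧ t ∈ U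
  sibling_ne : ∀ d < D, ∀ T ∈ part d, (part (d + 1)).filter (· ⊆ T) ≠ {T}

namespace Hierarchy

variable {𝒯 : Type*} [Fintype 𝒯] [DecidableEq 𝒯] {D : ℕ}

/-- The siblings `s(T)` of a block `T ∈ P_d`: the blocks of `P_{d+1}` included in `T`. -/
def siblings (H : Hierarchy 𝒯 D) (d : ℕ) (T : Finset 𝒯) : Finset (Finset 𝒯) :=
  (H.part (d + 1)).filter (· ⊆ T)

/-- The family `P_0^D = ⋃_{d=0}^D P_d` of all sets appearing in the hierarchy. -/
def levels (H : Hierarchy 𝒯 D) : Finset (Finset 𝒯) :=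
  (Finset.range (D + 1)).biUnion H.part

open Classical in
/-- The collection `𝒫_D` of all partitions of `𝒯` whose blocks all belong to `P_0^D`. -/
noncomputable def parts (H : Hierarchy 𝒯 D) : Finset (Finset (Finset 𝒯)) :=
  H.levels.powerset.filter IsPartitionOn

open Classical in
/-- The ancestors `P° = {T ∈ P_0^D : ∃ V ∈ P, V ⊊ T}` of a partition `P`. -/
noncomputable def ancestors (H : Hierarchy 𝒯 D) (P : Finset (Finset 𝒯)) :
    Finset (Finset 𝒯) :=
  H.levels.filter fun T => ∃ V ∈ P, V ⊂ T

/-- The branching-process weight `π(P) = ∏_{T ∈ P} (1 - ε_T) · ∏_{T ∈ P°} ε_T`. -/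
noncomputable def weight (H : Hierarchy 𝒯 D) (ε : Finset 𝒯 → ℝ)
    (P : Finset (Finset 𝒯)) : ℝ :=
  (∏ T ∈ P, (1 - ε T)) * ∏ T ∈ H.ancestors P, ε T

end Hierarchy

/-! For every block `T ∈ P_d`, the weights of the partitions of `T` into blocks of the
hierarchy, counting only the ancestors inside `T`, sum to `1`; this is proved by downward
induction on `d`. At a leaf the only partition is `{T}`, of weight `1 - ε_T = 1`. Otherwise a
partition is either `{T}`, of weight `1 - ε_T`, or has `T` as an ancestor; it is then the
disjoint union of arbitrary partitions of the children `U ∈ s(T)`, and its weight is `ε_T`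
times their weights, so these partitions contribute `ε_T · ∏_U 1`. -/

namespace Hierarchy

variable {𝒯 : Type*} [Fintype 𝒯] [DecidableEq 𝒯] {D : ℕ} (H : Hierarchy 𝒯 D)
  {d e : ℕ} {t : 𝒯} {T U V W : Finset 𝒯} {P : Finset (Finset 𝒯)}
  {p : H.siblings d T → Finset (Finset 𝒯)}

lemma mem_levels : V ∈ H.levels ↔ ∃ e ≤ D, V ∈ H.part e := by
  simp only [levels, mem_biUnion, mem_range, Nat.lt_succ_iff]

lemma nonempty_of_mem_part (he : e ≤ D) (hV : V ∈ H.part e) : V.Nonempty :=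
  (H.isPartition e he).1 V hV

lemma nonempty_of_mem_levels (hV : V ∈ H.levels) : V.Nonempty := by
  obtain ⟨e, he, hV⟩ := H.mem_levels.1 hV
  exact H.nonempty_of_mem_part he hV

lemma eq_of_mem_part (he : e ≤ D) (hU : U ∈ H.part e) (hV : V ∈ H.part e)
    (htU : t ∈ U) (htV : t ∈ V) : U = V :=
  ((H.isPartition e he).2 t).unique ⟨hU, htU⟩ ⟨hV, htV⟩

lemma subset_of_mem_part_of_le (hde : d ≤ e) (he : e ≤ D) (hT : T ∈ H.part d)
    (hV : V ∈ H.part e) (htT : t ∈ T) (htV : t ∈ V) : V ⊆ T := by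
  induction e, hde using Nat.le_induction generalizing V with
  | base => exact (H.eq_of_mem_part he hV hT htV htT).subset
  | succ e hde ih =>
    obtain ⟨W, ⟨hW, htW⟩, -⟩ := (H.isPartition e (by omega)).2 t
    obtain ⟨U, hU, hUW, htU⟩ := H.sibling_cover e (by omega) W hW t htW
    rw [H.eq_of_mem_part he hV hU htV htU]
    exact hUW.trans (ih (by omega) hW htW)

lemma mem_siblings : U ∈ H.siblings d T ↔ U ∈ H.part (d + 1) ∧ U ⊆ T :=
  mem_filter

lemma ssubset_of_mem_siblings (hd : d < D) (hT : T ∈ H.part d) (hU : U ∈ H.siblings d T) :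
    U ⊂ T := by
  obtain ⟨hU', hUT⟩ := H.mem_siblings.1 hU
  refine hUT.ssubset_of_ne fun hUT' => H.sibling_ne d hd T hT ?_
  subst hUT'
  refine eq_singleton_iff_unique_mem.2 ⟨H.mem_siblings.2 ⟨hU', subset_rfl⟩, fun W hW => ?_⟩
  obtain ⟨hW, hWU⟩ := H.mem_siblings.1 hW
  obtain ⟨t, htW⟩ := H.nonempty_of_mem_part hd hW
  exact H.eq_of_mem_part hd hW hU' htW (hWU htW)

lemma eq_of_mem_siblings (hd : d < D) (hU : U ∈ H.siblings d T) (hV : V ∈ H.siblings d T)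
    (htU : t ∈ U) (htV : t ∈ V) : U = V :=
  H.eq_of_mem_part hd (H.mem_siblings.1 hU).1 (H.mem_siblings.1 hV).1 htU htV

lemma exists_mem_siblings_superset (hd : d < D) (hT : T ∈ H.part d) (hV : V ∈ H.levels)
    (hVT : V ⊆ T) (hVT' : V ≠ T) : ∃ U ∈ H.siblings d T, V ⊆ U := by
  obtain ⟨e, he, hVe⟩ := H.mem_levels.1 hV
  obtain ⟨t, htV⟩ := H.nonempty_of_mem_part he hVe
  obtain ⟨U, hU, hUT, htU⟩ := H.sibling_cover d hd T hT t (hVT htV)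
  refine ⟨U, H.mem_siblings.2 ⟨hU, hUT⟩, H.subset_of_mem_part_of_le ?_ he hU hVe htU htV⟩
  by_contra! hed
  exact hVT' (hVT.antisymm
    (H.subset_of_mem_part_of_le (by omega) hd.le hVe hT htV (hVT htV)))

lemma pairwiseDisjoint_of_subset_siblings (hd : d < D) {F : H.siblings d T → Finset (Finset 𝒯)}
    (hF : ∀ U, ∀ V ∈ F U, V ∈ H.levels ∧ V ⊆ U) :
    (↑(univ : Finset (H.siblings d T)) : Set _).PairwiseDisjoint F := by
  intro U _ U' _ hUU'
  refine disjoint_left.2 fun V hV hV' => hUU' (Subtype.ext ?_)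
  obtain ⟨hVl, hVU⟩ := hF U V hV
  obtain ⟨t, htV⟩ := H.nonempty_of_mem_levels hVl
  exact H.eq_of_mem_siblings hd U.2 U'.2 (hVU htV) ((hF U' V hV').2 htV)

open Classical in
noncomputable def partsBelow (T : Finset 𝒯) : Finset (Finset (Finset 𝒯)) :=
  (H.levels.filter (· ⊆ T)).powerset.filter fun P => ∀ t ∈ T, ∃! V, V ∈ P ∧ t ∈ V

noncomputable def weightBelow (ε : Finset 𝒯 → ℝ) (T : Finset 𝒯) (P : Finset (Finset 𝒯)) :
    ℝ :=
  (∏ V ∈ P, (1 - ε V)) * ∏ W ∈ (H.ancestors P).filter (· ⊆ T), ε W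

lemma mem_partsBelow : P ∈ H.partsBelow T ↔
    (∀ V ∈ P, V ∈ H.levels ∧ V ⊆ T) ∧ ∀ t ∈ T, ∃! V, V ∈ P ∧ t ∈ V := by
  simp only [partsBelow, mem_filter, mem_powerset, subset_iff]

lemma mem_ancestors : W ∈ H.ancestors P ↔ W ∈ H.levels ∧ ∃ V ∈ P, V ⊂ W := by
  simp only [ancestors, mem_filter]

lemma parts_eq_partsBelow_univ : H.parts = H.partsBelow univ := by
  ext P
  simp only [parts, mem_filter, mem_powerset, IsPartitionOn, mem_partsBelow, subset_univ,
    and_true, mem_univ, true_imp_iff]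
  exact ⟨fun ⟨hP, _, hcover⟩ => ⟨fun V hV => hP hV, hcover⟩,
    fun ⟨hP, hcover⟩ => ⟨hP, fun V hV => H.nonempty_of_mem_levels (hP V hV), hcover⟩⟩

lemma weight_eq_weightBelow_univ (ε : Finset 𝒯 → ℝ) (P : Finset (Finset 𝒯)) :
    H.weight ε P = H.weightBelow ε univ P := by
  rw [weight, weightBelow, filter_true_of_mem fun W _ => subset_univ W]

lemma singleton_mem_partsBelow (hT : T ∈ H.levels) : {T} ∈ H.partsBelow T :=
  H.mem_partsBelow.2 ⟨by simpa using hT,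
    fun t ht => ⟨T, ⟨mem_singleton_self T, ht⟩, fun _ hV => mem_singleton.1 hV.1⟩⟩

lemma eq_singleton_of_mem_partsBelow (hP : P ∈ H.partsBelow T) (hTP : T ∈ P) : P = {T} := by
  obtain ⟨hsub, hcover⟩ := H.mem_partsBelow.1 hP
  refine eq_singleton_iff_unique_mem.2 ⟨hTP, fun V hV => ?_⟩
  obtain ⟨t, htV⟩ := H.nonempty_of_mem_levels (hsub V hV).1
  exact (hcover t ((hsub V hV).2 htV)).unique ⟨hV, htV⟩ ⟨hTP, (hsub V hV).2 htV⟩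

lemma filter_partsBelow_self_mem (hT : T ∈ H.levels) :
    (H.partsBelow T).filter (T ∈ ·) = {{T}} := by
  ext P
  simp only [mem_filter, mem_singleton]
  constructor
  · rintro ⟨hP, hTP⟩
    exact H.eq_singleton_of_mem_partsBelow hP hTP
  · rintro rfl
    exact ⟨H.singleton_mem_partsBelow hT, mem_singleton_self T⟩

lemma weightBelow_singleton (ε : Finset 𝒯 → ℝ) : H.weightBelow ε T {T} = 1 - ε T := by
  have : (H.ancestors {T}).filter (· ⊆ T) = ∅ := by
    refine filter_false_of_mem fun W hW hWT => ?_
    obtain ⟨-, V, hV, hVW⟩ := H.mem_ancestors.1 hW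
    rw [mem_singleton.1 hV] at hVW
    exact not_subset_of_ssubset hVW hWT
  rw [weightBelow, this, prod_empty, prod_singleton, mul_one]

lemma partsBelow_of_mem_part_last (hT : T ∈ H.part D) : H.partsBelow T = {{T}} := by
  have hTl : T ∈ H.levels := H.mem_levels.2 ⟨D, le_rfl, hT⟩
  rw [H.part_last] at hT
  obtain ⟨t, -, rfl⟩ := mem_image.1 hT
  refine eq_singleton_iff_unique_mem.2 ⟨H.singleton_mem_partsBelow hTl, fun P hP => ?_⟩
  obtain ⟨hsub, hcover⟩ := H.mem_partsBelow.1 hP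
  obtain ⟨V, ⟨hV, htV⟩, -⟩ := hcover t (mem_singleton_self t)
  rw [(H.nonempty_of_mem_levels (hsub V hV).1).subset_singleton_iff.1 (hsub V hV).2] at hV
  exact H.eq_singleton_of_mem_partsBelow hP hV

lemma exists_mem_siblings_superset_of_mem_partsBelow (hd : d < D) (hT : T ∈ H.part d)
    (hP : P ∈ H.partsBelow T) (hTP : T ∉ P) (hV : V ∈ P) : ∃ U ∈ H.siblings d T, V ⊆ U :=
  have hV' := (H.mem_partsBelow.1 hP).1 V hV
  H.exists_mem_siblings_superset hd hT hV'.1 hV'.2 (ne_of_mem_of_not_mem hV hTP)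

lemma filter_subset_mem_partsBelow (hd : d < D) (hT : T ∈ H.part d)
    (hP : P ∈ H.partsBelow T) (hTP : T ∉ P) (hU : U ∈ H.siblings d T) :
    P.filter (· ⊆ U) ∈ H.partsBelow U := by
  obtain ⟨hsub, hcover⟩ := H.mem_partsBelow.1 hP
  refine H.mem_partsBelow.2 ⟨fun V hV => ?_, fun t htU => ?_⟩
  · obtain ⟨hV, hVU⟩ := mem_filter.1 hV
    exact ⟨(hsub V hV).1, hVU⟩
  · obtain ⟨V, ⟨hV, htV⟩, huniq⟩ :=
      hcover t ((H.ssubset_of_mem_siblings hd hT hU).subset htU)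
    obtain ⟨U', hU', hVU'⟩ := H.exists_mem_siblings_superset_of_mem_partsBelow hd hT hP hTP hV
    rw [H.eq_of_mem_siblings hd hU' hU (hVU' htV) htU] at hVU'
    exact ⟨V, ⟨mem_filter.2 ⟨hV, hVU'⟩, htV⟩,
      fun V' hV' => huniq V' ⟨(mem_filter.1 hV'.1).1, hV'.2⟩⟩

lemma biUnion_filter_subset (hd : d < D) (hT : T ∈ H.part d)
    (hP : P ∈ H.partsBelow T) (hTP : T ∉ P) :
    univ.biUnion (fun U : H.siblings d T => P.filter (· ⊆ U.1)) = P := by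
  ext V
  simp only [mem_biUnion, mem_univ, true_and, mem_filter, Subtype.exists]
  refine ⟨fun ⟨_, _, hV, _⟩ => hV, fun hV => ?_⟩
  obtain ⟨U, hU, hVU⟩ := H.exists_mem_siblings_superset_of_mem_partsBelow hd hT hP hTP hV
  exact ⟨U, hU, hV, hVU⟩

lemma biUnion_mem_partsBelow (hd : d < D) (hT : T ∈ H.part d)
    (hp : ∀ U : H.siblings d T, p U ∈ H.partsBelow U.1) :
    univ.biUnion p ∈ H.partsBelow T := by
  refine H.mem_partsBelow.2 ⟨fun V hV => ?_, fun t ht => ?_⟩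
  · obtain ⟨U, -, hV⟩ := mem_biUnion.1 hV
    obtain ⟨hVl, hVU⟩ := (H.mem_partsBelow.1 (hp U)).1 V hV
    exact ⟨hVl, hVU.trans (H.ssubset_of_mem_siblings hd hT U.2).subset⟩
  · obtain ⟨U, hU, hUT, htU⟩ := H.sibling_cover d hd T hT t ht
    have hU : U ∈ H.siblings d T := H.mem_siblings.2 ⟨hU, hUT⟩
    obtain ⟨V, ⟨hV, htV⟩, huniq⟩ := (H.mem_partsBelow.1 (hp ⟨U, hU⟩)).2 t htU
    refine ⟨V, ⟨mem_biUnion.2 ⟨_, mem_univ _, hV⟩, htV⟩, fun V' ⟨hV', htV'⟩ => ?_⟩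
    obtain ⟨U', -, hV'⟩ := mem_biUnion.1 hV'
    obtain rfl : U' = ⟨U, hU⟩ := Subtype.ext <| H.eq_of_mem_siblings hd U'.2 hU
      (((H.mem_partsBelow.1 (hp U')).1 V' hV').2 htV') htU
    exact huniq V' ⟨hV', htV'⟩

lemma self_notMem_biUnion (hd : d < D) (hT : T ∈ H.part d)
    (hp : ∀ U : H.siblings d T, p U ∈ H.partsBelow U.1) : T ∉ univ.biUnion p := by
  intro hT'
  obtain ⟨U, -, hTU⟩ := mem_biUnion.1 hT'
  exact not_subset_of_ssubset (H.ssubset_of_mem_siblings hd hT U.2)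
    ((H.mem_partsBelow.1 (hp U)).1 T hTU).2

lemma filter_biUnion_subset (hd : d < D)
    (hp : ∀ U : H.siblings d T, p U ∈ H.partsBelow U.1) (U : H.siblings d T) :
    (univ.biUnion p).filter (· ⊆ U.1) = p U := by
  ext V
  simp only [mem_filter, mem_biUnion, mem_univ, true_and]
  refine ⟨fun ⟨⟨U', hV⟩, hVU⟩ => ?_,
    fun hV => ⟨⟨U, hV⟩, ((H.mem_partsBelow.1 (hp U)).1 V hV).2⟩⟩
  obtain ⟨hVl, hVU'⟩ := (H.mem_partsBelow.1 (hp U')).1 V hV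
  obtain ⟨t, htV⟩ := H.nonempty_of_mem_levels hVl
  rwa [Subtype.ext (H.eq_of_mem_siblings hd U'.2 U.2 (hVU' htV) (hVU htV))] at hV

lemma filter_ancestors_eq_insert (hd : d < D) (hT : T ∈ H.part d) (hP : P ∈ H.partsBelow T)
    (hTP : T ∉ P) :
    (H.ancestors P).filter (· ⊆ T) = insert T (univ.biUnion fun U : H.siblings d T =>
      (H.ancestors (P.filter (· ⊆ U.1))).filter (· ⊆ U.1)) := by
  obtain ⟨hsub, hcover⟩ := H.mem_partsBelow.1 hP
  ext W
  simp only [mem_filter, mem_insert, mem_biUnion, mem_univ, true_and, Subtype.exists,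
    mem_ancestors]
  constructor
  · rintro ⟨⟨hW, V, hV, hVW⟩, hWT⟩
    by_cases hWT' : W = T
    · exact Or.inl hWT'
    obtain ⟨U, hU, hWU⟩ := H.exists_mem_siblings_superset hd hT hW hWT hWT'
    exact Or.inr ⟨U, hU, ⟨hW, V, ⟨hV, hVW.subset.trans hWU⟩, hVW⟩, hWU⟩
  · rintro (rfl | ⟨U, hU, ⟨hW, V, ⟨hV, -⟩, hVW⟩, hWU⟩)
    · obtain ⟨t, ht⟩ := H.nonempty_of_mem_part hd.le hT
      obtain ⟨V, ⟨hV, -⟩, -⟩ := hcover t ht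
      have hVW : V ⊂ W := (hsub V hV).2.ssubset_of_ne (ne_of_mem_of_not_mem hV hTP)
      exact ⟨⟨H.mem_levels.2 ⟨d, hd.le, hT⟩, V, hV, hVW⟩, subset_rfl⟩
    · exact ⟨⟨hW, V, hV, hVW⟩, hWU.trans (H.ssubset_of_mem_siblings hd hT hU).subset⟩

lemma self_notMem_biUnion_filter_ancestors (hd : d < D) (hT : T ∈ H.part d) :
    T ∉ univ.biUnion fun U : H.siblings d T =>
      (H.ancestors (P.filter (· ⊆ U.1))).filter (· ⊆ U.1) := by
  intro hT'
  obtain ⟨U, -, hTU⟩ := mem_biUnion.1 hT'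
  exact not_subset_of_ssubset (H.ssubset_of_mem_siblings hd hT U.2) (mem_filter.1 hTU).2

lemma weightBelow_eq_mul_prod (ε : Finset 𝒯 → ℝ) (hd : d < D) (hT : T ∈ H.part d)
    (hP : P ∈ H.partsBelow T) (hTP : T ∉ P) :
    H.weightBelow ε T P =
      ε T * ∏ U : H.siblings d T, H.weightBelow ε U (P.filter (· ⊆ U.1)) := by
  have hblocks : ∏ V ∈ P, (1 - ε V) =
      ∏ U : H.siblings d T, ∏ V ∈ P.filter (· ⊆ U.1), (1 - ε V) := by
    rw [← prod_biUnion, H.biUnion_filter_subset hd hT hP hTP]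
    exact H.pairwiseDisjoint_of_subset_siblings hd fun U =>
      (H.mem_partsBelow.1 (H.filter_subset_mem_partsBelow hd hT hP hTP U.2)).1
  have hancestors : ∏ W ∈ (H.ancestors P).filter (· ⊆ T), ε W = ε T * ∏ U : H.siblings d T,
      ∏ W ∈ (H.ancestors (P.filter (· ⊆ U.1))).filter (· ⊆ U.1), ε W := by
    rw [H.filter_ancestors_eq_insert hd hT hP hTP,
      prod_insert (H.self_notMem_biUnion_filter_ancestors hd hT), prod_biUnion]
    exact H.pairwiseDisjoint_of_subset_siblings hd fun U W hW =>
      ⟨(H.mem_ancestors.1 (mem_filter.1 hW).1).1, (mem_filter.1 hW).2⟩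
  simp only [weightBelow, hblocks, hancestors, prod_mul_distrib]
  ring

lemma sum_weightBelow_filter_notMem (ε : Finset 𝒯 → ℝ) (hd : d < D) (hT : T ∈ H.part d) :
    ∑ P ∈ (H.partsBelow T).filter (T ∉ ·), H.weightBelow ε T P =
      ε T * ∏ U : H.siblings d T, ∑ Q ∈ H.partsBelow U, H.weightBelow ε U Q := by
  rw [prod_univ_sum, mul_sum]
  refine sum_nbij' (fun P U => P.filter (· ⊆ U.1)) (fun p => univ.biUnion p) ?_ ?_ ?_ ?_ ?_
  · intro P hP
    obtain ⟨hP, hTP⟩ := mem_filter.1 hP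
    exact Fintype.mem_piFinset.2 fun U => H.filter_subset_mem_partsBelow hd hT hP hTP U.2
  · intro p hp
    have hp := Fintype.mem_piFinset.1 hp
    exact mem_filter.2 ⟨H.biUnion_mem_partsBelow hd hT hp, H.self_notMem_biUnion hd hT hp⟩
  · intro P hP
    obtain ⟨hP, hTP⟩ := mem_filter.1 hP
    exact H.biUnion_filter_subset hd hT hP hTP
  · intro p hp
    exact funext (H.filter_biUnion_subset hd (Fintype.mem_piFinset.1 hp))
  · intro P hP
    obtain ⟨hP, hTP⟩ := mem_filter.1 hP
    exact H.weightBelow_eq_mul_prod ε hd hT hP hTP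

theorem sum_weightBelow_eq_one (ε : Finset 𝒯 → ℝ) (hεD : ∀ T ∈ H.part D, ε T = 0)
    (hd : d ≤ D) (hT : T ∈ H.part d) : ∑ P ∈ H.partsBelow T, H.weightBelow ε T P = 1 := by
  induction hd using Nat.decreasingInduction generalizing T with
  | self =>
    rw [H.partsBelow_of_mem_part_last hT, sum_singleton, weightBelow_singleton, hεD T hT,
      sub_zero]
  | of_succ d hd ih =>
    have hchildren (U : H.siblings d T) : ∑ Q ∈ H.partsBelow U, H.weightBelow ε U Q = 1 :=
      ih (H.mem_siblings.1 U.2).1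
    rw [← sum_filter_add_sum_filter_not _ (T ∈ ·),
      H.filter_partsBelow_self_mem (H.mem_levels.2 ⟨d, hd.le, hT⟩), sum_singleton,
      weightBelow_singleton, H.sum_weightBelow_filter_notMem ε hd hT]
    simp only [hchildren, prod_const_one, mul_one, sub_add_cancel]

end Hierarchy

theorem weight_sum_eq_one_general
    {𝒯 : Type*} [Fintype 𝒯] [DecidableEq 𝒯] {D : ℕ}
    (H : Hierarchy 𝒯 D) (ε : Finset 𝒯 → ℝ)
    (hεD : ∀ T ∈ H.part D, ε T = 0) :
    ∑ P ∈ H.parts, H.weight ε P = 1 := by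
  have huniv : (univ : Finset 𝒯) ∈ H.part 0 := H.part_zero ▸ mem_singleton_self _
  simp only [H.parts_eq_partsBelow_univ, H.weight_eq_weightBelow_univ]
  exact H.sum_weightBelow_eq_one ε hεD (Nat.zero_le D) huniv

/-- **The branching-process weights form a probability distribution on `𝒫_D`:**
`∑_{P ∈ 𝒫_D} π(P) = 1`. -/
theorem weight_sum_eq_one
    {𝒯 : Type*} [Fintype 𝒯] [DecidableEq 𝒯] [Nonempty 𝒯] {D : ℕ}
    (H : Hierarchy 𝒯 D) (ε : Finset 𝒯 → ℝ)
    (hε01 : ∀ T ∈ H.levels, 0 ≤ ε T ∧ ε T ≤ 1)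
    (hεD : ∀ T ∈ H.part D, ε T = 0) :
    ∑ P ∈ H.parts, H.weight ε P = 1 :=
  weight_sum_eq_one_general H ε hεD
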